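/- arXiv:2010.07753 — 5 statements merged into one kernel-verified Lean document; each statement's English description precedes it below -/
import Mathlib

section
/- Let U : ℝ^m → ℝ be differentiable with gradient ∇U, let L be a real m×m matrix with Lᵀ = -L, and let g : ℝ^m → ℝ^k be differentiable with Jacobian matrix G(q). Suppose q, p : ℝ → ℝ^m are differentiable and λ : ℝ → ℝ^k is such that for all t ∈ ℝ: q̇_t = p_t, ṗ_t = -∇U(q_t) - L p_t - G(q_t)ᵀ λ_t, and G(q_t) p_t = 0. Then the function t ↦ U(q_t) + (1/2)‖p_t‖² is constant on ℝ. -/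
/-!
Along a solution, `d/dt [U(q) + ½ p ⬝ p] = ∇U(q) ⬝ p + p ⬝ ṗ = -p ⬝ L p - p ⬝ G(q)ᵀ λ`.
The first term vanishes because `L` is skew-symmetric, the second equals `(G(q) p) ⬝ λ = 0`
by the constraint, so the energy has zero derivative everywhere and is constant.
-/

open Matrix

theorem Matrix.dotProduct_mulVec_self_eq_zero_of_transpose_eq_neg {R n : Type*} [CommRing R]
    [NoZeroDivisors R] [CharZero R] [Fintype n] {L : Matrix n n R} (hL : Lᵀ = -L) (v : n → R) :
    v ⬝ᵥ L *ᵥ v = 0 := by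
  refine self_eq_neg.mp ?_
  calc v ⬝ᵥ L *ᵥ v = Lᵀ *ᵥ v ⬝ᵥ v := by rw [dotProduct_mulVec, mulVec_transpose]
    _ = -(v ⬝ᵥ L *ᵥ v) := by rw [hL, neg_mulVec, neg_dotProduct, dotProduct_comm]

theorem Matrix.dotProduct_transpose_mulVec_eq_zero {R m n : Type*} [CommSemiring R] [Fintype m]
    [Fintype n] {A : Matrix m n R} {v : n → R} (hv : A *ᵥ v = 0) (w : m → R) :
    v ⬝ᵥ Aᵀ *ᵥ w = 0 := by
  rw [dotProduct_mulVec, vecMul_transpose, hv, zero_dotProduct]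

theorem HasDerivAt.dotProduct {𝕜 n : Type*} [NontriviallyNormedField 𝕜] [Fintype n]
    {f g : 𝕜 → n → 𝕜} {f' g' : n → 𝕜} {t : 𝕜} (hf : HasDerivAt f f' t) (hg : HasDerivAt g g' t) :
    HasDerivAt (fun s => f s ⬝ᵥ g s) (f' ⬝ᵥ g t + f t ⬝ᵥ g') t := by
  exact (HasDerivAt.fun_sum (u := Finset.univ) fun i _ =>
    (hasDerivAt_pi.mp hf i).mul (hasDerivAt_pi.mp hg i)).congr_deriv Finset.sum_add_distrib

theorem stmt0_general {m k : ℕ}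
    (U : (Fin m → ℝ) → ℝ) (gradU : (Fin m → ℝ) → (Fin m → ℝ))
    (hU : Differentiable ℝ U)
    (hgradU : ∀ x v, fderiv ℝ U x v = gradU x ⬝ᵥ v)
    (L : Matrix (Fin m) (Fin m) ℝ) (hL : Lᵀ = -L)
    (G : (Fin m → ℝ) → Matrix (Fin k) (Fin m) ℝ)
    (q p : ℝ → (Fin m → ℝ)) (lam : ℝ → (Fin k → ℝ))
    (hq : ∀ t, HasDerivAt q (p t) t)
    (hp : ∀ t, HasDerivAt p
      (-(gradU (q t)) - L.mulVec (p t) - (G (q t))ᵀ.mulVec (lam t)) t)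
    (hcon : ∀ t, (G (q t)).mulVec (p t) = 0) :
    ∀ s t : ℝ, U (q s) + (1/2) * (p s ⬝ᵥ p s) = U (q t) + (1/2) * (p t ⬝ᵥ p t) := by
  have hpower : ∀ t, (-(gradU (q t)) - L *ᵥ p t - (G (q t))ᵀ *ᵥ lam t) ⬝ᵥ p t =
      -(gradU (q t) ⬝ᵥ p t) := fun t => by
    rw [dotProduct_comm, dotProduct_sub, dotProduct_sub, dotProduct_neg,
      dotProduct_mulVec_self_eq_zero_of_transpose_eq_neg hL,
      dotProduct_transpose_mulVec_eq_zero (hcon t), dotProduct_comm]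
    ring
  have henergy : ∀ t, HasDerivAt (fun t => U (q t) + (1/2) * (p t ⬝ᵥ p t)) 0 t := fun t => by
    have hUq : HasDerivAt (fun t => U (q t)) (gradU (q t) ⬝ᵥ p t) t := by
      have h := (hU (q t)).hasFDerivAt.comp_hasDerivAt t (hq t)
      rwa [hgradU] at h
    refine (hUq.add (((hp t).dotProduct (hp t)).const_mul (1/2))).congr_deriv ?_
    rw [dotProduct_comm (p t), hpower]
    ring
  intro s t
  exact is_const_of_deriv_eq_zero (fun x => (henergy x).differentiableAt)
    (fun x => (henergy x).deriv) s t

/-- Energy conservation for constrained magnetic Hamiltonian dynamics: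
along solutions of `q̇ = p`, `ṗ = -∇U(q) - L p - G(q)ᵀ λ`, `G(q) p = 0`,
the Hamiltonian `U(q) + ½‖p‖²` is constant. -/
theorem stmt0 {m k : ℕ}
    (U : (Fin m → ℝ) → ℝ) (gradU : (Fin m → ℝ) → (Fin m → ℝ))
    (hU : Differentiable ℝ U)
    (hgradU : ∀ x v, fderiv ℝ U x v = gradU x ⬝ᵥ v)
    (L : Matrix (Fin m) (Fin m) ℝ) (hL : Lᵀ = -L)
    (g : (Fin m → ℝ) → (Fin k → ℝ)) (G : (Fin m → ℝ) → Matrix (Fin k) (Fin m) ℝ)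
    (hg : Differentiable ℝ g)
    (hG : ∀ x v, fderiv ℝ g x v = (G x).mulVec v)
    (q p : ℝ → (Fin m → ℝ)) (lam : ℝ → (Fin k → ℝ))
    (hq : ∀ t, HasDerivAt q (p t) t)
    (hp : ∀ t, HasDerivAt p
      (-(gradU (q t)) - L.mulVec (p t) - (G (q t))ᵀ.mulVec (lam t)) t)
    (hcon : ∀ t, (G (q t)).mulVec (p t) = 0) :
    ∀ s t : ℝ, U (q s) + (1/2) * (p s ⬝ᵥ p s) = U (q t) + (1/2) * (p t ⬝ᵥ p t) :=
  stmt0_general U gradU hU hgradU L hL G q p lam hq hp hcon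
end

section
/- Let g : ℝ^m → ℝ^k be twice continuously differentiable with Jacobian matrix G(q), let ε ∈ ℝ, and let μ : ℝ^m × ℝ^m → ℝ^k be differentiable. Define Ψ : ℝ^m × ℝ^m → ℝ^m × ℝ^m by Ψ(q,p) = (q, p - (ε/2) G(q)ᵀ μ(q,p)). Fix (q,p), let D denote the total derivative of Ψ at (q,p), and let u = (u_q, u_p), v = (v_q, v_p) ∈ ℝ^m × ℝ^m satisfy G(q) u_q = 0 and G(q) v_q = 0. Writing D u = (u_q, u_p') and D v = (v_q, v_p'), one has ⟨u_q, v_p'⟩ - ⟨v_q, u_p'⟩ = ⟨u_q, v_p⟩ - ⟨v_q, u_p⟩. -/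
open Matrix

/-!
Write `Ψ(q, p) = (q, p - (ε/2) F(q, p))` with `F(q, p) = G(q)ᵀ μ(q, p)`. The 2-form changes by
`(ε/2) (⟨v_q, DF u⟩ - ⟨u_q, DF v⟩)`. Since `⟨a, F(q, p)⟩ = ⟨Dg(q) a, μ(q, p)⟩`, differentiating
gives `⟨a, DF b⟩ = ⟨D²g(q)(b_q, a), μ⟩ + ⟨Dg(q) a, Dμ b⟩`. For tangent `u_q`, `v_q` the second
term vanishes, and the first is symmetric in `(u, v)` by symmetry of the second derivative of `g`.
-/

section DotProduct

variable {𝕜 E ι : Type*} [NontriviallyNormedField 𝕜] [NormedAddCommGroup E] [NormedSpace 𝕜 E]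
  [Fintype ι] {f h : E → ι → 𝕜} {x : E}

theorem HasFDerivAt.dotProduct {f' h' : E →L[𝕜] ι → 𝕜} (hf : HasFDerivAt f f' x)
    (hh : HasFDerivAt h h' x) :
    HasFDerivAt (fun y => f y ⬝ᵥ h y)
      (∑ i, (f x i • (ContinuousLinearMap.proj i).comp h'
        + h x i • (ContinuousLinearMap.proj i).comp f')) x :=
  HasFDerivAt.fun_sum fun i _ => (hasFDerivAt_pi'.1 hf i).mul (hasFDerivAt_pi'.1 hh i)

theorem DifferentiableAt.dotProduct (hf : DifferentiableAt 𝕜 f x) (hh : DifferentiableAt 𝕜 h x) :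
    DifferentiableAt 𝕜 (fun y => f y ⬝ᵥ h y) x :=
  (hf.hasFDerivAt.dotProduct hh.hasFDerivAt).differentiableAt

theorem fderiv_dotProduct_apply (hf : DifferentiableAt 𝕜 f x) (hh : DifferentiableAt 𝕜 h x)
    (b : E) :
    fderiv 𝕜 (fun y => f y ⬝ᵥ h y) x b = fderiv 𝕜 f x b ⬝ᵥ h x + f x ⬝ᵥ fderiv 𝕜 h x b := by
  rw [(hf.hasFDerivAt.dotProduct hh.hasFDerivAt).fderiv]
  simp [dotProduct, Finset.sum_add_distrib, mul_comm, add_comm]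

end DotProduct

theorem fderiv_shear_apply {𝕜 E F : Type*} [NontriviallyNormedField 𝕜] [NormedAddCommGroup E]
    [NormedSpace 𝕜 E] [NormedAddCommGroup F] [NormedSpace 𝕜 F] {S : E × F → F} {z : E × F}
    (hS : DifferentiableAt 𝕜 S z) (w : E × F) :
    fderiv 𝕜 (fun z => (z.1, z.2 - S z)) z w = (w.1, w.2 - fderiv 𝕜 S z w) := by
  have hder : HasFDerivAt (fun z : E × F => (z.1, z.2 - S z))
      ((ContinuousLinearMap.fst 𝕜 E F).prod (ContinuousLinearMap.snd 𝕜 E F - fderiv 𝕜 S z)) z :=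
    hasFDerivAt_fst.prodMk (hasFDerivAt_snd.sub hS.hasFDerivAt)
  rw [hder.fderiv]
  rfl

section ConstraintForce

variable {m k : ℕ} {g : (Fin m → ℝ) → (Fin k → ℝ)} {G : (Fin m → ℝ) → Matrix (Fin k) (Fin m) ℝ}
  {μ : (Fin m → ℝ) × (Fin m → ℝ) → (Fin k → ℝ)} {z : (Fin m → ℝ) × (Fin m → ℝ)}

def constraintForce (G : (Fin m → ℝ) → Matrix (Fin k) (Fin m) ℝ)
    (μ : (Fin m → ℝ) × (Fin m → ℝ) → (Fin k → ℝ)) (z : (Fin m → ℝ) × (Fin m → ℝ)) :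
    Fin m → ℝ :=
  (G z.1)ᵀ *ᵥ μ z

variable (hG : ∀ x v, fderiv ℝ g x v = G x *ᵥ v)
include hG

theorem dotProduct_constraintForce (z : (Fin m → ℝ) × (Fin m → ℝ)) (a : Fin m → ℝ) :
    a ⬝ᵥ constraintForce G μ z = fderiv ℝ g z.1 a ⬝ᵥ μ z := by
  rw [constraintForce, dotProduct_mulVec, vecMul_transpose, hG]

variable (hg : DifferentiableAt ℝ (fderiv ℝ g) z.1) (hμ : DifferentiableAt ℝ μ z)
include hg hμ

theorem differentiableAt_constraintForce : DifferentiableAt ℝ (constraintForce G μ) z := by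
  classical
  refine differentiableAt_pi.2 fun j => ?_
  have hcomp : (fun z => constraintForce G μ z j)
      = fun z => fderiv ℝ g z.1 (Pi.single j 1) ⬝ᵥ μ z := by
    funext z
    rw [← dotProduct_constraintForce hG, single_one_dotProduct]
  rw [hcomp]
  exact ((hg.comp z differentiableAt_fst).clm_apply (differentiableAt_const _)).dotProduct hμ

theorem dotProduct_fderiv_constraintForce (a : Fin m → ℝ) (b : (Fin m → ℝ) × (Fin m → ℝ)) :
    a ⬝ᵥ fderiv ℝ (constraintForce G μ) z b
      = fderiv ℝ (fderiv ℝ g) z.1 b.1 a ⬝ᵥ μ z + fderiv ℝ g z.1 a ⬝ᵥ fderiv ℝ μ z b := by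
  have hdg : HasFDerivAt (fun z : (Fin m → ℝ) × (Fin m → ℝ) => fderiv ℝ g z.1 a)
      ((fderiv ℝ (fderiv ℝ g) z.1).comp (ContinuousLinearMap.fst ℝ _ _) |>.flip a) z := by
    simpa using (hg.hasFDerivAt.comp z hasFDerivAt_fst).clm_apply (hasFDerivAt_const a z)
  have hdiff := congrArg (fderiv ℝ · z b) (funext (dotProduct_constraintForce (μ := μ) hG · a))
  rw [fderiv_dotProduct_apply (differentiableAt_const a)
      (differentiableAt_constraintForce hG hg hμ), fderiv_dotProduct_apply hdg.differentiableAt hμ,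
    hdg.fderiv] at hdiff
  simpa using hdiff

end ConstraintForce

/-- The Lagrange-multiplier momentum half-step
`Ψ(q,p) = (q, p - (ε/2) G(q)ᵀ μ(q,p))` preserves the canonical symplectic 2-form
`dq ∧ dp` on pairs of vectors whose position components are tangent to the
constraint set. -/
theorem stmt3 {m k : ℕ}
    (g : (Fin m → ℝ) → (Fin k → ℝ)) (G : (Fin m → ℝ) → Matrix (Fin k) (Fin m) ℝ)
    (hg : ContDiff ℝ 2 g)
    (hG : ∀ x v, fderiv ℝ g x v = (G x).mulVec v)
    (ε : ℝ)
    (μ : (Fin m → ℝ) × (Fin m → ℝ) → (Fin k → ℝ)) (hμ : Differentiable ℝ μ)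
    (Ψ : (Fin m → ℝ) × (Fin m → ℝ) → (Fin m → ℝ) × (Fin m → ℝ))
    (hΨ : ∀ z, Ψ z = (z.1, z.2 - (ε/2) • (G z.1)ᵀ.mulVec (μ z)))
    (q p : Fin m → ℝ)
    (u v : (Fin m → ℝ) × (Fin m → ℝ))
    (hu : (G q).mulVec u.1 = 0) (hv : (G q).mulVec v.1 = 0) :
    u.1 ⬝ᵥ (fderiv ℝ Ψ (q, p) v).2 - v.1 ⬝ᵥ (fderiv ℝ Ψ (q, p) u).2
      = u.1 ⬝ᵥ v.2 - v.1 ⬝ᵥ u.2 := by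
  obtain rfl : Ψ = fun z => (z.1, z.2 - (ε / 2) • constraintForce G μ z) := funext hΨ
  have hg' : Differentiable ℝ (fderiv ℝ g) := (hg.fderiv_right le_rfl).differentiable one_ne_zero
  have hsymm : IsSymmSndFDerivAt ℝ g q := hg.contDiffAt.isSymmSndFDerivAt (by simp)
  have hF := differentiableAt_constraintForce hG (hg' q) (hμ (q, p))
  rw [← hG] at hu hv
  rw [fderiv_shear_apply (hF.fun_const_smul _), fderiv_shear_apply (hF.fun_const_smul _)]
  simp only [fderiv_fun_const_smul hF, _root_.smul_apply, dotProduct_sub, dotProduct_smul,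
    smul_eq_mul, dotProduct_fderiv_constraintForce hG (hg' q) (hμ (q, p)), hu, hv, hsymm u.1 v.1,
    zero_dotProduct]
  ring
end

section
/- Let L be a real m×m skew-symmetric matrix (Lᵀ = -L) and ε ∈ ℝ. Let E = exp(-εL) and A = ∫_0^ε exp(-sL) ds (matrix exponential, entrywise integral). Let J_L be the 2m×2m block matrix [[L, I_m],[-I_m, 0]] and let M be the 2m×2m block matrix [[I_m, A],[0, E]]. Then Mᵀ J_L M = J_L. -/
/-!
Write `A = ∫₀^ε e^{-sL} ds` and `E = e^{-εL}`. The fundamental theorem of calculus gives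
`L A = 1 - E`, and transposing with `Lᵀ = -L` gives `Aᵀ L = Eᵀ - 1`. Since `Aᵀ = ∫₀^ε e^{sL} ds`,
the substitution `s ↦ ε - s` gives `Aᵀ E = A`. These three identities are exactly the block
equations of `Mᵀ J_L M = J_L`.
-/

open Matrix

section ExpIntegral

variable {𝔸 : Type*} [NormedRing 𝔸] [NormedAlgebra ℝ 𝔸] [CompleteSpace 𝔸]

open NormedSpace intervalIntegral

theorem mul_intervalIntegral_exp_smul (x : 𝔸) (a b : ℝ) :
    x * ∫ s in a..b, exp (s • x) = exp (b • x) - exp (a • x) := by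
  have hcont : Continuous fun s : ℝ => exp (s • x) :=
    (differentiable_exp_smul_const ℝ x).continuous
  have hmul : x * ∫ s in a..b, exp (s • x) = ∫ s in a..b, x * exp (s • x) :=
    ((ContinuousLinearMap.mul ℝ 𝔸 x).intervalIntegral_comp_comm (hcont.intervalIntegrable a b)).symm
  rw [hmul]
  exact integral_eq_sub_of_hasDerivAt (fun s _ => hasDerivAt_exp_smul_const' x s)
    ((continuous_const.mul hcont).intervalIntegrable a b)

theorem mul_intervalIntegral_exp_neg_smul (x : 𝔸) (ε : ℝ) :
    x * ∫ s in (0:ℝ)..ε, exp (-(s • x)) = 1 - exp (-(ε • x)) := by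
  have h := mul_intervalIntegral_exp_smul (-x) 0 ε
  simp only [smul_neg, zero_smul, neg_zero, exp_zero, neg_mul] at h
  rw [← neg_sub, ← h, neg_neg]

theorem intervalIntegral_exp_smul_mul_exp_neg_smul (x : 𝔸) (ε : ℝ) :
    (∫ s in (0:ℝ)..ε, exp (s • x)) * exp (-(ε • x)) = ∫ s in (0:ℝ)..ε, exp (-(s • x)) := by
  have hcont : Continuous fun s : ℝ => exp (s • x) :=
    (differentiable_exp_smul_const ℝ x).continuous
  -- `exp_add_of_commute` is stated for normed `ℚ`-algebras
  let := NormedAlgebra.restrictScalars ℚ ℝ 𝔸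
  have hshift (s : ℝ) : exp (s • x) * exp (-(ε • x)) = exp (-((ε - s) • x)) := by
    rw [← exp_add_of_commute ((Commute.refl x).smul_left s |>.smul_right ε |>.neg_right),
      sub_smul, neg_sub, sub_eq_add_neg]
  have hmul : (∫ s in (0:ℝ)..ε, exp (s • x)) * exp (-(ε • x))
      = ∫ s in (0:ℝ)..ε, exp (s • x) * exp (-(ε • x)) :=
    ((ContinuousLinearMap.mul ℝ 𝔸).flip (exp (-(ε • x))) |>.intervalIntegral_comp_comm
      (hcont.intervalIntegrable 0 ε)).symm
  rw [hmul]
  simp only [hshift]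
  rw [integral_comp_sub_left (fun s => exp (-(s • x))), sub_self, sub_zero]

end ExpIntegral

section LinftyOp

attribute [local instance] Matrix.linftyOpNormedAddCommGroup Matrix.linftyOpNormedSpace

theorem Matrix.of_intervalIntegral_apply {m n : Type*} [Fintype m] [Fintype n]
    {f : ℝ → Matrix m n ℝ} (hf : Continuous f) (a b : ℝ) :
    Matrix.of (fun i j => ∫ s in a..b, f s i j) = ∫ s in a..b, f s := by
  ext i j
  exact (entryLinearMap ℝ ℝ i j).toContinuousLinearMap.intervalIntegral_comp_comm
    (hf.intervalIntegrable a b)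

end LinftyOp

theorem Matrix.fromBlocks_transpose_mul_fromBlocks_mul_fromBlocks_eq {R n : Type*} [CommRing R]
    [Fintype n] [DecidableEq n] {L A E : Matrix n n R} (hL : Lᵀ = -L) (hLA : L * A = 1 - E)
    (hAE : Aᵀ * E = A) :
    (fromBlocks 1 A 0 E)ᵀ * fromBlocks L 1 (-1) 0 * fromBlocks 1 A 0 E = fromBlocks L 1 (-1) 0 := by
  have hAL : Aᵀ * L = Eᵀ - 1 := by
    have h := congrArg transpose hLA
    rw [transpose_mul, hL, transpose_sub, transpose_one, Matrix.mul_neg] at h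
    rw [← neg_sub, ← h, neg_neg]
  rw [fromBlocks_transpose, fromBlocks_multiply, fromBlocks_multiply]
  congr 1 <;> simp only [Matrix.one_mul, Matrix.mul_one, Matrix.mul_zero, transpose_one,
    transpose_zero, Matrix.mul_neg, add_zero, neg_zero]
  · rw [hLA, sub_add_cancel]
  · rw [hAL]; abel
  · rw [hAL, hAE]; noncomm_ring

/-- The Jacobian `M = [[I, A],[0, E]]` of the exact kinetic magnetic flow
(with `E = exp(-εL)`, `A = ∫₀^ε exp(-sL) ds`) is symplectic with respect to the
magnetic symplectic matrix `J_L = [[L, I],[-I, 0]]`: `Mᵀ J_L M = J_L`. -/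
theorem stmt5 {m : ℕ}
    (L : Matrix (Fin m) (Fin m) ℝ) (hL : Lᵀ = -L) (ε : ℝ)
    (E A : Matrix (Fin m) (Fin m) ℝ)
    (hE : E = NormedSpace.exp (-(ε • L)))
    (hA : A = Matrix.of fun i j => ∫ s in (0:ℝ)..ε, NormedSpace.exp (-(s • L)) i j)
    (J M : Matrix (Fin m ⊕ Fin m) (Fin m ⊕ Fin m) ℝ)
    (hJ : J = Matrix.fromBlocks L 1 (-1) 0)
    (hM : M = Matrix.fromBlocks 1 A 0 E) :
    Mᵀ * J * M = J := by
  have hexp_transpose (s : ℝ) : (NormedSpace.exp (-(s • L)))ᵀ = NormedSpace.exp (s • L) := by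
    rw [← Matrix.exp_transpose, transpose_neg, transpose_smul, hL, smul_neg, neg_neg]
  -- any Banach-algebra norm on matrices will do: it only serves to form matrix-valued integrals
  let : NormedRing (Matrix (Fin m) (Fin m) ℝ) := Matrix.linftyOpNormedRing
  let : NormedAlgebra ℝ (Matrix (Fin m) (Fin m) ℝ) := Matrix.linftyOpNormedAlgebra
  have hA' : A = ∫ s in (0:ℝ)..ε, NormedSpace.exp (-(s • L)) := by
    rw [hA, of_intervalIntegral_apply]
    simp only [← smul_neg]
    exact (differentiable_exp_smul_const ℝ (-L)).continuous
  have hAt : Aᵀ = ∫ s in (0:ℝ)..ε, NormedSpace.exp (s • L) := by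
    refine Eq.trans ?_ <|
      of_intervalIntegral_apply (differentiable_exp_smul_const ℝ L).continuous 0 ε
    ext i j
    simp only [hA, transpose_apply, of_apply]
    congr 1 with s
    exact congrFun₂ (hexp_transpose s) i j
  have hLA : L * A = 1 - E := by
    rw [hA', hE]
    exact mul_intervalIntegral_exp_neg_smul L ε
  have hAE : Aᵀ * E = A := by
    rw [hAt, hE, hA']
    exact intervalIntegral_exp_smul_mul_exp_neg_smul L ε
  rw [hJ, hM]
  exact fromBlocks_transpose_mul_fromBlocks_mul_fromBlocks_eq hL hLA hAE
end

section
/- Let U : ℝ^m → ℝ be differentiable with gradient ∇U and let L be a real m×m skew-symmetric matrix. For ε ∈ ℝ define Φ1_ε(q,p) = (q, p - (ε/2)∇U(q)) and Φ2_ε(q,p) = (q + A(ε) p, exp(-εL) p) on ℝ^m × ℝ^m, where A(ε) = ∫_0^ε exp(-sL) ds, and let Ψ_ε = Φ1_ε ∘ Φ2_ε ∘ Φ1_ε. Then for every (q,p) ∈ ℝ^m × ℝ^m and every ε ∈ ℝ: Ψ_{-ε}(Ψ_ε(q,p)) = (q,p). -/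
open Matrix

/-!
Both factors are time-reversible, `Φᵢ_{-ε} ∘ Φᵢ_ε = id`, and `Ψ_ε` is a palindromic composition of
them, so `Ψ_{-ε}` undoes `Ψ_ε`. For the kick `Φ1` this is immediate. For the magnetic drift `Φ2`,
the momentum part is undone since `exp(εL)` inverts `exp(-εL)`, and the position part because the
substitution `s ↦ s + ε` gives `A(-ε) exp(-εL) = ∫_ε^0 exp(-sL) ds = -A(ε)`.
-/

namespace Matrix

variable {n : Type*} [Fintype n] [DecidableEq n]

open scoped Matrix.Norms.Operator in
theorem continuous_exp_neg_smul_apply (L : Matrix n n ℝ) (i j : n) :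
    Continuous fun s : ℝ => NormedSpace.exp (-(s • L)) i j := by
  have hexp : Continuous fun s : ℝ => NormedSpace.exp (-(s • L)) :=
    NormedSpace.exp_continuous.comp (by fun_prop)
  exact (continuous_apply_apply i j).comp hexp

theorem exp_neg_smul_mul_exp_neg_smul (L : Matrix n n ℝ) (s t : ℝ) :
    NormedSpace.exp (-(s • L)) * NormedSpace.exp (-(t • L)) = NormedSpace.exp (-((s + t) • L)) := by
  rw [← exp_add_of_commute _ _ ((Commute.refl L).smul_left s |>.smul_right t).neg_left.neg_right,
    add_smul, neg_add]

theorem exp_mul_exp_neg (M : Matrix n n ℝ) : NormedSpace.exp M * NormedSpace.exp (-M) = 1 := by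
  rw [← exp_add_of_commute _ _ (Commute.refl M).neg_right, add_neg_cancel, NormedSpace.exp_zero]

theorem integral_exp_neg_smul_neg_mul_exp_neg_smul (L : Matrix n n ℝ) (ε : ℝ) :
    (of fun i j => ∫ s in (0 : ℝ)..-ε, NormedSpace.exp (-(s • L)) i j) *
        NormedSpace.exp (-(ε • L)) =
      -of fun i j => ∫ s in (0 : ℝ)..ε, NormedSpace.exp (-(s • L)) i j := by
  ext i j
  simp only [mul_apply, neg_apply, of_apply, ← intervalIntegral.integral_mul_const]
  rw [← intervalIntegral.integral_finsetSum
    (f := fun k s => NormedSpace.exp (-(s • L)) i k * NormedSpace.exp (-(ε • L)) k j) fun k _ =>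
    ((continuous_exp_neg_smul_apply L i k).mul continuous_const).intervalIntegrable _ _]
  simp only [← mul_apply, exp_neg_smul_mul_exp_neg_smul]
  rw [intervalIntegral.integral_comp_add_right (fun t => NormedSpace.exp (-(t • L)) i j) ε,
    zero_add, neg_add_cancel, intervalIntegral.integral_symm]

end Matrix

theorem stmt6_general {m : ℕ}
    (gradU : (Fin m → ℝ) → (Fin m → ℝ))
    (L : Matrix (Fin m) (Fin m) ℝ)
    (A : ℝ → Matrix (Fin m) (Fin m) ℝ)
    (hA : ∀ ε : ℝ, A ε = Matrix.of fun i j =>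
      ∫ s in (0:ℝ)..ε, NormedSpace.exp (-(s • L)) i j)
    (Φ1 Φ2 Ψ : ℝ → (Fin m → ℝ) × (Fin m → ℝ) → (Fin m → ℝ) × (Fin m → ℝ))
    (hΦ1 : ∀ ε z, Φ1 ε z = (z.1, z.2 - (ε/2) • gradU z.1))
    (hΦ2 : ∀ ε z, Φ2 ε z =
      (z.1 + (A ε).mulVec z.2, (NormedSpace.exp (-(ε • L))).mulVec z.2))
    (hΨ : ∀ ε, Ψ ε = Φ1 ε ∘ Φ2 ε ∘ Φ1 ε) :
    ∀ (ε : ℝ) (z : (Fin m → ℝ) × (Fin m → ℝ)), Ψ (-ε) (Ψ ε z) = z := by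
  intro ε
  have hΦ1_rev : Function.LeftInverse (Φ1 (-ε)) (Φ1 ε) := fun z => by
    simp [hΦ1, neg_div]
  have hΦ2_rev : Function.LeftInverse (Φ2 (-ε)) (Φ2 ε) := fun z => by
    have hA_rev : A (-ε) * NormedSpace.exp (-(ε • L)) = -A ε := by
      simpa only [hA] using integral_exp_neg_smul_neg_mul_exp_neg_smul L ε
    simp only [hΦ2, neg_smul, neg_neg, mulVec_mulVec, exp_mul_exp_neg, one_mulVec, hA_rev,
      neg_mulVec, add_neg_cancel_right]
  rw [hΨ, hΨ]
  exact hΦ1_rev.comp (hΦ2_rev.comp hΦ1_rev)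

/-- The single-step magnetic integrator `Ψ_ε = Φ1_ε ∘ Φ2_ε ∘ Φ1_ε` is symmetric:
applying it with step size `-ε` undoes the step with step size `ε`. -/
theorem stmt6 {m : ℕ}
    (U : (Fin m → ℝ) → ℝ) (gradU : (Fin m → ℝ) → (Fin m → ℝ))
    (hU : Differentiable ℝ U)
    (hgradU : ∀ x v, fderiv ℝ U x v = gradU x ⬝ᵥ v)
    (L : Matrix (Fin m) (Fin m) ℝ) (hL : Lᵀ = -L)
    (A : ℝ → Matrix (Fin m) (Fin m) ℝ)
    (hA : ∀ ε : ℝ, A ε = Matrix.of fun i j =>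
      ∫ s in (0:ℝ)..ε, NormedSpace.exp (-(s • L)) i j)
    (Φ1 Φ2 Ψ : ℝ → (Fin m → ℝ) × (Fin m → ℝ) → (Fin m → ℝ) × (Fin m → ℝ))
    (hΦ1 : ∀ ε z, Φ1 ε z = (z.1, z.2 - (ε/2) • gradU z.1))
    (hΦ2 : ∀ ε z, Φ2 ε z =
      (z.1 + (A ε).mulVec z.2, (NormedSpace.exp (-(ε • L))).mulVec z.2))
    (hΨ : ∀ ε, Ψ ε = Φ1 ε ∘ Φ2 ε ∘ Φ1 ε) :
    ∀ (ε : ℝ) (z : (Fin m → ℝ) × (Fin m → ℝ)), Ψ (-ε) (Ψ ε z) = z :=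
  stmt6_general gradU L A hA Φ1 Φ2 Ψ hΦ1 hΦ2 hΨ
end

section
/- Let U : ℝ^m → ℝ be twice continuously differentiable and let L be a real m×m skew-symmetric matrix. For ε ∈ ℝ define Φ1_ε(q,p) = (q, p - (ε/2)∇U(q)) and Φ2_ε(q,p) = (q + A(ε) p, exp(-εL) p) on ℝ^m × ℝ^m, where A(ε) = ∫_0^ε exp(-sL) ds, and let Ψ_ε = Φ1_ε ∘ Φ2_ε ∘ Φ1_ε. Then Ψ_ε is differentiable, and at every (q,p) ∈ ℝ^m × ℝ^m its total derivative D satisfies ⟨D u, J_L (D v)⟩ = ⟨u, J_L v⟩ for all u, v ∈ ℝ^m × ℝ^m, where J_L is the 2m×2m block matrix [[L, I_m],[-I_m, 0]] and ⟨·,·⟩ is the Euclidean inner product on ℝ^m × ℝ^m ≅ ℝ^{2m}. -/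
/-!
By the chain rule the derivative of `Ψ_ε` is a product of three linear maps, and each of them
preserves `ω_L(u, v) = ⟨u_q, L v_q⟩ + ⟨u_q, v_p⟩ - ⟨v_q, u_p⟩`. The derivative of the kick `Φ1_ε`
is `(u_q, u_p) ↦ (u_q, u_p - H u_q)` with `H = (ε/2) ∇²U(q)`, which preserves `ω_L` because the
Hessian is symmetric. The drift `Φ2_ε` is the linear map `(u_q, u_p) ↦ (u_q + A u_p, E u_p)` with
`E = exp(-εL)`; it preserves `ω_L` once `E + L A = 1` and `Eᵀ A = Aᵀ`. The first identity is the
fundamental theorem of calculus for `s ↦ exp(-sL)`, the second follows from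
`exp(εL) exp(-sL) = exp((ε-s)L)`, the substitution `s ↦ ε - s` and `exp(-sL)ᵀ = exp(sL)`.
-/

open Matrix NormedSpace

section MatrixExponential

theorem Matrix.mulVec_dotProduct {R l m : Type*} [CommSemiring R] [Fintype l] [Fintype m]
    (M : Matrix l m R) (x : m → R) (y : l → R) : M *ᵥ x ⬝ᵥ y = x ⬝ᵥ Mᵀ *ᵥ y := by
  rw [dotProduct_transpose_mulVec, dotProduct_comm]

theorem Matrix.mul_of_intervalIntegral {l m n : Type*} [Fintype m] (M : Matrix l m ℝ)
    {f : ℝ → Matrix m n ℝ} (hf : Continuous f) (a b : ℝ) :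
    M * of (fun i j => ∫ s in a..b, f s i j) = of fun i j => ∫ s in a..b, (M * f s) i j := by
  ext i j
  simp only [mul_apply, of_apply, ← intervalIntegral.integral_const_mul]
  exact (intervalIntegral.integral_finsetSum fun k _ =>
    ((hf.matrix_elem k j).const_mul _).intervalIntegrable a b).symm

variable {n : Type*} [Fintype n] [DecidableEq n]

open scoped Matrix.Norms.Operator in
theorem Matrix.hasDerivAt_exp_smul_apply (N : Matrix n n ℝ) (i j : n) (s : ℝ) :
    HasDerivAt (fun t : ℝ => exp (t • N) i j) ((N * exp (s • N)) i j) s :=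
  ((entryLinearMap ℝ ℝ i j).toContinuousLinearMap.hasFDerivAt).comp_hasDerivAt s
    (hasDerivAt_exp_smul_const' N s)

open scoped Matrix.Norms.Operator in
theorem Matrix.continuous_exp_smul (N : Matrix n n ℝ) : Continuous fun t : ℝ => exp (t • N) := by
  fun_prop

theorem Matrix.intervalIntegral_mul_exp_smul_apply (N : Matrix n n ℝ) (i j : n) (a b : ℝ) :
    ∫ s in a..b, (N * exp (s • N)) i j = exp (b • N) i j - exp (a • N) i j :=
  intervalIntegral.integral_eq_sub_of_hasDerivAt (fun t _ => hasDerivAt_exp_smul_apply N i j t)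
    (((continuous_const.mul (continuous_exp_smul N)).matrix_elem i j).intervalIntegrable a b)

theorem Matrix.exp_neg_smul_add_mul_integral (L : Matrix n n ℝ) (ε : ℝ) :
    exp (-(ε • L)) + L * of (fun i j => ∫ s in (0:ℝ)..ε, exp (-(s • L)) i j) = 1 := by
  have hneg : ∀ s : ℝ, -(s • L) = s • -L := fun s => (smul_neg s L).symm
  simp only [hneg]
  rw [mul_of_intervalIntegral L (continuous_exp_smul (-L))]
  ext i j
  have hftc := intervalIntegral_mul_exp_smul_apply (-L) i j 0 ε
  simp only [neg_mul, neg_apply, intervalIntegral.integral_neg, zero_smul, exp_zero] at hftc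
  simp only [add_apply, of_apply]
  linarith

theorem Matrix.exp_smul_mul_integral (L : Matrix n n ℝ) (ε : ℝ) :
    exp (ε • L) * of (fun i j => ∫ s in (0:ℝ)..ε, exp (-(s • L)) i j)
      = of fun i j => ∫ s in (0:ℝ)..ε, exp (s • L) i j := by
  rw [mul_of_intervalIntegral _ (by simpa only [smul_neg] using continuous_exp_smul (-L))]
  ext i j
  have hexp : ∀ s : ℝ, exp (ε • L) * exp (-(s • L)) = exp ((ε - s) • L) := fun s => by
    rw [← exp_add_of_commute _ _ (((Commute.refl L).smul_left ε).smul_right s).neg_right,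
      sub_smul, sub_eq_add_neg]
  simp only [hexp, of_apply]
  simpa using intervalIntegral.integral_comp_sub_left (fun t => exp (t • L) i j) ε (a := 0) (b := ε)

theorem Matrix.transpose_exp_neg_smul {L : Matrix n n ℝ} (hL : Lᵀ = -L) (s : ℝ) :
    (exp (-(s • L)))ᵀ = exp (s • L) := by
  rw [← exp_transpose, transpose_neg, transpose_smul, hL, smul_neg, neg_neg]

theorem Matrix.transpose_exp_neg_smul_mul_integral {L : Matrix n n ℝ} (hL : Lᵀ = -L) (ε : ℝ) :
    (exp (-(ε • L)))ᵀ * of (fun i j => ∫ s in (0:ℝ)..ε, exp (-(s • L)) i j)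
      = (of fun i j => ∫ s in (0:ℝ)..ε, exp (-(s • L)) i j)ᵀ := by
  rw [transpose_exp_neg_smul hL, exp_smul_mul_integral]
  ext i j
  simp only [transpose_apply, of_apply, ← transpose_exp_neg_smul hL]

end MatrixExponential

section MagneticForm

variable {n : Type*}

def kick (H : (n → ℝ) →L[ℝ] (n → ℝ)) : (n → ℝ) × (n → ℝ) →L[ℝ] (n → ℝ) × (n → ℝ) :=
  (ContinuousLinearMap.fst ℝ _ _).prod
    (ContinuousLinearMap.snd ℝ _ _ - H ∘L ContinuousLinearMap.fst ℝ _ _)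

@[simp]
theorem kick_apply (H : (n → ℝ) →L[ℝ] (n → ℝ)) (u : (n → ℝ) × (n → ℝ)) :
    kick H u = (u.1, u.2 - H u.1) := rfl

variable [Fintype n]

noncomputable def drift (A E : Matrix n n ℝ) : (n → ℝ) × (n → ℝ) →L[ℝ] (n → ℝ) × (n → ℝ) :=
  LinearMap.toContinuousLinearMap <|
    (LinearMap.fst ℝ _ _ + A.mulVecLin ∘ₗ LinearMap.snd ℝ _ _).prod
      (E.mulVecLin ∘ₗ LinearMap.snd ℝ _ _)

@[simp]
theorem drift_apply (A E : Matrix n n ℝ) (u : (n → ℝ) × (n → ℝ)) :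
    drift A E u = (u.1 + A *ᵥ u.2, E *ᵥ u.2) := rfl

def magneticForm (L : Matrix n n ℝ) (u v : (n → ℝ) × (n → ℝ)) : ℝ :=
  u.1 ⬝ᵥ L *ᵥ v.1 + u.1 ⬝ᵥ v.2 - v.1 ⬝ᵥ u.2

def PreservesMagneticForm (L : Matrix n n ℝ)
    (T : (n → ℝ) × (n → ℝ) →L[ℝ] (n → ℝ) × (n → ℝ)) : Prop :=
  ∀ u v, magneticForm L (T u) (T v) = magneticForm L u v

theorem PreservesMagneticForm.comp {L : Matrix n n ℝ}
    {S T : (n → ℝ) × (n → ℝ) →L[ℝ] (n → ℝ) × (n → ℝ)}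
    (hS : PreservesMagneticForm L S) (hT : PreservesMagneticForm L T) :
    PreservesMagneticForm L (S ∘L T) :=
  fun u v => (hS (T u) (T v)).trans (hT u v)

theorem preservesMagneticForm_kick (L : Matrix n n ℝ) {H : (n → ℝ) →L[ℝ] (n → ℝ)}
    (hH : ∀ x y, x ⬝ᵥ H y = y ⬝ᵥ H x) : PreservesMagneticForm L (kick H) := by
  intro u v
  simp only [magneticForm, kick_apply, dotProduct_sub, hH u.1 v.1]
  ring

theorem preservesMagneticForm_drift [DecidableEq n] {L A E : Matrix n n ℝ} (hL : Lᵀ = -L)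
    (h₁ : E + L * A = 1) (h₂ : Eᵀ * A = Aᵀ) : PreservesMagneticForm L (drift A E) := by
  rintro ⟨u₁, u₂⟩ ⟨v₁, v₂⟩
  have expand : magneticForm L (drift A E (u₁, u₂)) (drift A E (v₁, v₂)) =
      u₁ ⬝ᵥ L *ᵥ v₁ + u₁ ⬝ᵥ (E + L * A) *ᵥ v₂ + u₂ ⬝ᵥ (Aᵀ * L - Eᵀ) *ᵥ v₁
        + u₂ ⬝ᵥ (Aᵀ * (E + L * A) - Eᵀ * A) *ᵥ v₂ := by
    simp only [magneticForm, drift_apply, mulVec_add, add_mulVec, sub_mulVec, dotProduct_add,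
      add_dotProduct, dotProduct_sub, mul_add, ← mulVec_mulVec, Matrix.mulVec_dotProduct]
    rw [dotProduct_transpose_mulVec E u₂ v₁, dotProduct_transpose_mulVec E u₂,
      Matrix.mulVec_dotProduct]
    ring
  have h₁_transpose : Aᵀ * L - Eᵀ = -1 := by
    have := congrArg transpose h₁
    rw [transpose_add, transpose_mul, hL, transpose_one] at this
    rw [← this]
    noncomm_ring
  rw [expand, h₁, h₁_transpose, h₂, mul_one, sub_self, one_mulVec, neg_mulVec, one_mulVec,
    zero_mulVec, dotProduct_zero, dotProduct_neg, dotProduct_comm u₂, magneticForm]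
  ring

def IsMagneticSymplectic (L : Matrix n n ℝ) (f : (n → ℝ) × (n → ℝ) → (n → ℝ) × (n → ℝ)) :
    Prop :=
  Differentiable ℝ f ∧ ∀ z, PreservesMagneticForm L (fderiv ℝ f z)

theorem IsMagneticSymplectic.comp {L : Matrix n n ℝ}
    {f g : (n → ℝ) × (n → ℝ) → (n → ℝ) × (n → ℝ)}
    (hf : IsMagneticSymplectic L f) (hg : IsMagneticSymplectic L g) :
    IsMagneticSymplectic L (f ∘ g) := by
  refine ⟨hf.1.comp hg.1, fun z => ?_⟩
  rw [fderiv_comp z (hf.1 (g z)) (hg.1 z)]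
  exact (hf.2 (g z)).comp (hg.2 z)

theorem PreservesMagneticForm.isMagneticSymplectic {L : Matrix n n ℝ}
    {T : (n → ℝ) × (n → ℝ) →L[ℝ] (n → ℝ) × (n → ℝ)} (hT : PreservesMagneticForm L T) :
    IsMagneticSymplectic L T :=
  ⟨T.differentiable, fun z => by rwa [T.fderiv]⟩

theorem isMagneticSymplectic_kick (L : Matrix n n ℝ) {g : (n → ℝ) → n → ℝ}
    {H : (n → ℝ) → (n → ℝ) →L[ℝ] (n → ℝ)} (hg : ∀ q, HasFDerivAt g (H q) q)
    (hH : ∀ q x y, x ⬝ᵥ H q y = y ⬝ᵥ H q x) :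
    IsMagneticSymplectic L fun z => (z.1, z.2 - g z.1) := by
  have hderiv : ∀ z : (n → ℝ) × (n → ℝ),
      HasFDerivAt (fun z => (z.1, z.2 - g z.1)) (kick (H z.1)) z :=
    fun z => hasFDerivAt_fst.prodMk (hasFDerivAt_snd.sub ((hg z.1).comp z hasFDerivAt_fst))
  refine ⟨fun z => (hderiv z).differentiableAt, fun z => ?_⟩
  rw [(hderiv z).fderiv]
  exact preservesMagneticForm_kick L (hH z.1)

variable [DecidableEq n]

noncomputable def gradientCLM : ((n → ℝ) →L[ℝ] ℝ) →L[ℝ] (n → ℝ) :=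
  ContinuousLinearMap.pi fun i => ContinuousLinearMap.apply ℝ ℝ (Pi.single i 1)

theorem dotProduct_gradientCLM (x : n → ℝ) (φ : (n → ℝ) →L[ℝ] ℝ) :
    x ⬝ᵥ gradientCLM φ = φ x :=
  calc x ⬝ᵥ gradientCLM φ = ∑ i, x i * φ (Pi.single i 1) := rfl
    _ = ∑ i, φ (Pi.single i (x i)) := by
      congr! 1 with i
      rw [← smul_eq_mul, ← map_smul, ← Pi.single_smul', smul_eq_mul, mul_one]
    _ = φ x := by rw [← map_sum, Finset.univ_sum_single]

theorem eq_gradientCLM_fderiv {U : (n → ℝ) → ℝ} {gradU : (n → ℝ) → n → ℝ}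
    (hgradU : ∀ x v, fderiv ℝ U x v = gradU x ⬝ᵥ v) :
    gradU = fun x => gradientCLM (fderiv ℝ U x) := by
  funext x i
  simp [gradientCLM, hgradU]

theorem isMagneticSymplectic_kick_gradient (L : Matrix n n ℝ) {U : (n → ℝ) → ℝ}
    {gradU : (n → ℝ) → n → ℝ} (hU : ContDiff ℝ 2 U)
    (hgradU : ∀ x v, fderiv ℝ U x v = gradU x ⬝ᵥ v) (c : ℝ) :
    IsMagneticSymplectic L fun z => (z.1, z.2 - c • gradU z.1) := by
  have hU' : ∀ q, HasFDerivAt (fderiv ℝ U) (fderiv ℝ (fderiv ℝ U) q) q := fun q =>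
    ((hU.fderiv_right (m := 1) (by norm_num)).differentiable (by norm_num) q).hasFDerivAt
  refine isMagneticSymplectic_kick L (g := fun q => c • gradU q)
    (H := fun q => c • gradientCLM ∘L fderiv ℝ (fderiv ℝ U) q) (fun q => ?_) fun q x y => ?_
  · rw [eq_gradientCLM_fderiv hgradU]
    exact (gradientCLM.hasFDerivAt.comp q (hU' q)).const_smul c
  · simp only [FunLike.coe_smul, Pi.smul_apply, ContinuousLinearMap.comp_apply, dotProduct_smul,
      dotProduct_gradientCLM]
    rw [hU.contDiffAt.isSymmSndFDerivAt (by simp) y x]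

end MagneticForm

/-- The single-step magnetic integrator `Ψ_ε = Φ1_ε ∘ Φ2_ε ∘ Φ1_ε` is
differentiable and its total derivative preserves the magnetic symplectic
bilinear form `⟨u, J_L v⟩ = ⟨u_q, L v_q⟩ + ⟨u_q, v_p⟩ - ⟨v_q, u_p⟩` at every
point. -/
theorem stmt7 {m : ℕ}
    (U : (Fin m → ℝ) → ℝ) (gradU : (Fin m → ℝ) → (Fin m → ℝ))
    (hU : ContDiff ℝ 2 U)
    (hgradU : ∀ x v, fderiv ℝ U x v = gradU x ⬝ᵥ v)
    (L : Matrix (Fin m) (Fin m) ℝ) (hL : Lᵀ = -L)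
    (A : ℝ → Matrix (Fin m) (Fin m) ℝ)
    (hA : ∀ ε : ℝ, A ε = Matrix.of fun i j =>
      ∫ s in (0:ℝ)..ε, NormedSpace.exp (-(s • L)) i j)
    (Φ1 Φ2 Ψ : ℝ → (Fin m → ℝ) × (Fin m → ℝ) → (Fin m → ℝ) × (Fin m → ℝ))
    (hΦ1 : ∀ ε z, Φ1 ε z = (z.1, z.2 - (ε/2) • gradU z.1))
    (hΦ2 : ∀ ε z, Φ2 ε z =
      (z.1 + (A ε).mulVec z.2, (NormedSpace.exp (-(ε • L))).mulVec z.2))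
    (hΨ : ∀ ε, Ψ ε = Φ1 ε ∘ Φ2 ε ∘ Φ1 ε) :
    ∀ ε : ℝ, Differentiable ℝ (Ψ ε) ∧
      ∀ (z u v : (Fin m → ℝ) × (Fin m → ℝ)),
        (fderiv ℝ (Ψ ε) z u).1 ⬝ᵥ L.mulVec ((fderiv ℝ (Ψ ε) z v).1)
          + (fderiv ℝ (Ψ ε) z u).1 ⬝ᵥ (fderiv ℝ (Ψ ε) z v).2
          - (fderiv ℝ (Ψ ε) z v).1 ⬝ᵥ (fderiv ℝ (Ψ ε) z u).2
        = u.1 ⬝ᵥ L.mulVec v.1 + u.1 ⬝ᵥ v.2 - v.1 ⬝ᵥ u.2 := by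
  intro ε
  have hΦ1ε : IsMagneticSymplectic L (Φ1 ε) := by
    rw [funext (hΦ1 ε)]
    exact isMagneticSymplectic_kick_gradient L hU hgradU (ε / 2)
  have hΦ2ε : IsMagneticSymplectic L (Φ2 ε) := by
    have hdrift : Φ2 ε = drift (A ε) (exp (-(ε • L))) := funext (hΦ2 ε)
    rw [hdrift, hA]
    exact (preservesMagneticForm_drift hL (Matrix.exp_neg_smul_add_mul_integral L ε)
      (Matrix.transpose_exp_neg_smul_mul_integral hL ε)).isMagneticSymplectic
  rw [hΨ ε]
  exact hΦ1ε.comp (hΦ2ε.comp hΦ1ε)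
end
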